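/- Let A be a nonsingular complex matrix whose *cosquare A⁻*A is diagonalizable with all eigenvalues of unit modulus. Then A is *congruent to a diagonal matrix whose diagonal entries all have unit modulus. In particular, if A⁻*A = λ²I for a unimodular λ, then λ̄A is Hermitian and A is *congruent to λI_{p} ⊕ (-λI_{q}) for uniquely determined nonnegative integers p, q with p + q = n. -/

import Mathlib

open Matrix

def MatSimilar {m : Type*} [Fintype m] [DecidableEq m] (A B : Matrix m m ℂ) : Prop :=
  ∃ S : Matrix m m ℂ, IsUnit S ∧ A = S⁻¹ * B * S

def StarCongruent {m : Type*} [Fintype m] [DecidableEq m] (A B : Matrix m m ℂ) : Prop :=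
  ∃ S : Matrix m m ℂ, IsUnit S ∧ A = Sᴴ * B * S

/-!
Conjugating the cosquare to `D = S (A⁻ᴴ A) S⁻¹` replaces `A` by the *congruent
`B = S⁻ᴴ A S⁻¹`, for which `B = Bᴴ D`. Comparing `B i j` with `B j i` shows that `B i j = 0`
unless `D i = D j`, so `B` is block diagonal along the level sets of `D`; on the block where
`D = λ²` we have `B = λ² Bᴴ`, i.e. `λ̄ B` is Hermitian. The spectral theorem makes each block
*congruent to `λ` times a real diagonal matrix, and the real scaling `diag (√|μᵢ|)` normalizes
the entries to modulus one (they are nonzero since `A` is nonsingular). When `A⁻ᴴ A = λ² I`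
there is a single block and the normalized entries are `±λ`. The number of `+` signs is
Sylvester's inertia index: if `J_q = Rᴴ J_p R` with `q > p`, some nonzero `v` is supported on
the first `q` coordinates while `R v` vanishes on the first `p`, and then `v* J_q v > 0 ≥
(R v)* J_p (R v)`.
-/

theorem conj_mul_self_of_norm_eq_one {z : ℂ} (hz : ‖z‖ = 1) : starRingEnd ℂ z * z = 1 := by
  rw [Complex.conj_mul', hz]; norm_num

theorem exists_sq_eq_of_norm_eq_one {δ : ℂ} (hδ : ‖δ‖ = 1) :
    ∃ lam : ℂ, ‖lam‖ = 1 ∧ lam ^ 2 = δ := by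
  obtain ⟨lam, hlam⟩ := IsAlgClosed.exists_pow_nat_eq δ two_pos
  refine ⟨lam, ?_, hlam⟩
  rw [← hlam, norm_pow] at hδ
  exact (pow_eq_one_iff_of_nonneg (norm_nonneg lam) two_ne_zero).mp hδ

theorem mul_ofReal_div_norm {lam : ℂ} (hlam : ‖lam‖ = 1) {μ : ℝ} (hμ : μ ≠ 0) :
    lam * μ / ‖lam * μ‖ = if 0 < μ then lam else -lam := by
  rw [norm_mul, hlam, one_mul, Complex.norm_real, Real.norm_eq_abs]
  split_ifs with h
  · rw [abs_of_pos h, mul_div_assoc, div_self (by exact_mod_cast hμ), mul_one]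
  · rw [abs_of_neg (lt_of_le_of_ne (not_lt.mp h) hμ), Complex.ofReal_neg, mul_div_assoc,
      div_neg, div_self (by exact_mod_cast hμ), mul_neg, mul_one]

theorem isHermitian_conj_smul_of_eq_sq_smul_conjTranspose {m : Type*} {A : Matrix m m ℂ} {lam : ℂ}
    (hlam : ‖lam‖ = 1) (hA : A = lam ^ 2 • Aᴴ) : (starRingEnd ℂ lam • A).IsHermitian := by
  calc (starRingEnd ℂ lam • A)ᴴ = lam • Aᴴ := by simp [conjTranspose_smul]
    _ = (starRingEnd ℂ lam * lam) • lam • Aᴴ := by rw [conj_mul_self_of_norm_eq_one hlam, one_smul]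
    _ = starRingEnd ℂ lam • A := by
      conv_rhs => rw [hA]
      rw [smul_smul, smul_smul]
      ring_nf

theorem submatrix_sigmaFiberEquiv_eq_blockDiagonal' {m κ : Type*} [Fintype κ] [DecidableEq κ]
    (c : m → κ) {A : Matrix m m ℂ} (hA : ∀ i j, c i ≠ c j → A i j = 0) :
    A.submatrix (Equiv.sigmaFiberEquiv c) (Equiv.sigmaFiberEquiv c) =
      blockDiagonal' fun k => A.submatrix (Subtype.val : {i // c i = k} → m) Subtype.val := by
  ext ⟨k, i, hi⟩ ⟨k', j, hj⟩
  by_cases hk : k = k'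
  · subst hk
    simp [blockDiagonal'_apply_eq]
  · rw [blockDiagonal'_apply_ne _ _ _ hk]
    exact hA i j (by rwa [hi, hj])

namespace StarCongruent

variable {m : Type*} [Fintype m] [DecidableEq m] {A B C : Matrix m m ℂ}

theorem refl (A : Matrix m m ℂ) : StarCongruent A A := ⟨1, isUnit_one, by simp⟩

theorem trans (h₁ : StarCongruent A B) (h₂ : StarCongruent B C) : StarCongruent A C := by
  obtain ⟨S, hS, rfl⟩ := h₁
  obtain ⟨T, hT, rfl⟩ := h₂
  exact ⟨T * S, hT.mul hS, by simp only [conjTranspose_mul, Matrix.mul_assoc]⟩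

theorem symm (h : StarCongruent A B) : StarCongruent B A := by
  obtain ⟨S, hS, rfl⟩ := h
  have hS' : IsUnit S.det := (isUnit_iff_isUnit_det S).mp hS
  have hSH : IsUnit Sᴴ.det := by simpa using hS'.star
  refine ⟨S⁻¹, isUnit_nonsing_inv_iff.mpr hS, ?_⟩
  rw [conjTranspose_nonsing_inv, Matrix.mul_assoc, Matrix.mul_assoc, mul_nonsing_inv _ hS',
    Matrix.mul_one, nonsing_inv_mul_cancel_left _ _ hSH]

theorem smul (c : ℂ) (h : StarCongruent A B) : StarCongruent (c • A) (c • B) := by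
  obtain ⟨S, hS, rfl⟩ := h
  exact ⟨S, hS, by rw [Matrix.mul_smul, Matrix.smul_mul]⟩

theorem isUnit (h : StarCongruent A B) (hB : IsUnit B) : IsUnit A := by
  obtain ⟨S, hS, rfl⟩ := h
  exact ((isUnit_conjTranspose S).mpr hS |>.mul hB).mul hS

theorem submatrix {n : Type*} [Fintype n] [DecidableEq n] (h : StarCongruent A B) (e : n ≃ m) :
    StarCongruent (A.submatrix e e) (B.submatrix e e) := by
  obtain ⟨S, hS, rfl⟩ := h
  exact ⟨S.submatrix e e, (isUnit_submatrix_equiv e e).mpr hS, by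
    rw [conjTranspose_submatrix, submatrix_mul_equiv, submatrix_mul_equiv]⟩

theorem blockDiagonal' {κ : Type*} [Fintype κ] [DecidableEq κ] {n : κ → Type*}
    [∀ k, Fintype (n k)] [∀ k, DecidableEq (n k)] {A B : ∀ k, Matrix (n k) (n k) ℂ}
    (h : ∀ k, StarCongruent (A k) (B k)) :
    StarCongruent (Matrix.blockDiagonal' A) (Matrix.blockDiagonal' B) := by
  choose S hS hAS using h
  refine ⟨Matrix.blockDiagonal' S, (Pi.isUnit_iff.mpr hS).map (blockDiagonal'RingHom n ℂ), ?_⟩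
  rw [blockDiagonal'_conjTranspose, ← blockDiagonal'_mul, ← blockDiagonal'_mul]
  exact congrArg Matrix.blockDiagonal' (funext hAS)

theorem diagonal_ne_zero {d : m → ℂ}
    (h : StarCongruent A (diagonal d)) (hA : IsUnit A) (i : m) : d i ≠ 0 :=
  (Pi.isUnit_iff.mp (isUnit_diagonal.mp (h.symm.isUnit hA)) i).ne_zero

end StarCongruent

section

variable {m : Type*} [Fintype m] [DecidableEq m]

theorem starCongruent_submatrix_perm (A : Matrix m m ℂ) (σ : Equiv.Perm m) :
    StarCongruent (A.submatrix σ σ) A := by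
  refine ⟨σ⁻¹.permMatrix ℂ, ?_, ?_⟩
  · rw [isUnit_iff_isUnit_det, det_permutation]
    exact (Units.isUnit _).map (Int.castRingHom ℂ)
  · rw [conjTranspose_permMatrix, inv_inv, PEquiv.toMatrix_toPEquiv_mul,
      PEquiv.mul_toMatrix_toPEquiv]
    rfl

theorem Matrix.IsHermitian.starCongruent_diagonal_eigenvalues {M : Matrix m m ℂ}
    (hM : M.IsHermitian) : StarCongruent M (diagonal fun i => (hM.eigenvalues i : ℂ)) := by
  refine ⟨star (hM.eigenvectorUnitary : Matrix m m ℂ), ?_, ?_⟩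
  · exact (Unitary.toUnits (star hM.eigenvectorUnitary)).isUnit
  · conv_lhs => rw [hM.spectral_theorem]
    simp [star_eq_conjTranspose, Function.comp_def]

theorem starCongruent_diagonal_div_norm {d : m → ℂ} (hd : ∀ i, d i ≠ 0) :
    StarCongruent (diagonal d) (diagonal fun i => d i / ‖d i‖) := by
  set r : m → ℂ := fun i => (√‖d i‖ : ℝ)
  refine ⟨diagonal r, isUnit_diagonal.mpr (Pi.isUnit_iff.mpr fun i => ?_), ?_⟩
  · simpa [r] using hd i
  · rw [diagonal_conjTranspose, diagonal_mul_diagonal, diagonal_mul_diagonal]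
    congr 1
    funext i
    have hsq : (r i : ℂ) * r i = ‖d i‖ := by
      simp only [r, ← Complex.ofReal_mul, Real.mul_self_sqrt (norm_nonneg _)]
    have hnorm : (‖d i‖ : ℂ) ≠ 0 := by simpa using hd i
    simp only [Pi.star_apply, r, Complex.star_def, Complex.conj_ofReal] at hsq ⊢
    rw [mul_right_comm, hsq, mul_div_cancel₀ _ hnorm]

theorem exists_starCongruent_diagonal_of_eq_sq_smul_conjTranspose {A : Matrix m m ℂ} {lam : ℂ}
    (hlam : ‖lam‖ = 1) (hA : A = lam ^ 2 • Aᴴ) :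
    ∃ μ : m → ℝ, StarCongruent A (diagonal fun i => lam * μ i) := by
  have hH := isHermitian_conj_smul_of_eq_sq_smul_conjTranspose hlam hA
  refine ⟨hH.eigenvalues, ?_⟩
  have h := hH.starCongruent_diagonal_eigenvalues.smul lam
  rwa [smul_smul, mul_comm, conj_mul_self_of_norm_eq_one hlam, one_smul, ← diagonal_smul] at h

theorem apply_eq_star_mul_of_eq_conjTranspose_mul_diagonal {B : Matrix m m ℂ} {D : m → ℂ}
    (hB : B = Bᴴ * diagonal D) (i j : m) : B i j = star (B j i) * D j := by
  conv_lhs => rw [hB]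
  rw [mul_diagonal, conjTranspose_apply]

theorem apply_eq_zero_of_eq_conjTranspose_mul_diagonal {B : Matrix m m ℂ} {D : m → ℂ}
    (hD : ∀ i, ‖D i‖ = 1) (hB : B = Bᴴ * diagonal D) {i j : m} (hij : D i ≠ D j) :
    B i j = 0 := by
  have hBij : B i j = B i j * (starRingEnd ℂ (D i) * D j) := by
    conv_lhs => rw [apply_eq_star_mul_of_eq_conjTranspose_mul_diagonal hB i j,
      apply_eq_star_mul_of_eq_conjTranspose_mul_diagonal hB j i]
    simp only [star_mul', Complex.star_def, Complex.conj_conj]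
    ring
  have hne : starRingEnd ℂ (D i) * D j ≠ 1 := fun h => hij <| by
    rw [← one_mul (D i), ← h, mul_right_comm, mul_comm _ (D i), Complex.mul_conj',
      hD i, Complex.ofReal_one, one_pow, one_mul]
  by_contra h0
  exact hne (mul_left_cancel₀ h0 (hBij.symm.trans (mul_one _).symm))

theorem exists_starCongruent_diagonal_of_blocks {κ : Type*} [Fintype κ] [DecidableEq κ]
    (c : m → κ) {A : Matrix m m ℂ} (hA : ∀ i j, c i ≠ c j → A i j = 0)
    (h : ∀ k, ∃ d, StarCongruent (A.submatrix (Subtype.val : {i // c i = k} → m) Subtype.val)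
      (diagonal d)) :
    ∃ d : m → ℂ, StarCongruent A (diagonal d) := by
  choose d hd using h
  set e := Equiv.sigmaFiberEquiv c
  have hblock : StarCongruent (A.submatrix e e) (diagonal fun x => d x.1 x.2) := by
    rw [submatrix_sigmaFiberEquiv_eq_blockDiagonal' c hA, ← blockDiagonal'_diagonal]
    exact StarCongruent.blockDiagonal' hd
  refine ⟨fun i => d (e.symm i).1 (e.symm i).2, ?_⟩
  have := hblock.submatrix e.symm
  rwa [submatrix_submatrix, e.self_comp_symm, submatrix_id_id, submatrix_diagonal_equiv] at this

theorem exists_starCongruent_diagonal_of_eq_conjTranspose_mul_diagonal {B : Matrix m m ℂ}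
    {D : m → ℂ} (hD : ∀ i, ‖D i‖ = 1) (hB : B = Bᴴ * diagonal D) :
    ∃ d : m → ℂ, StarCongruent B (diagonal d) := by
  classical
  refine exists_starCongruent_diagonal_of_blocks (Set.rangeFactorization D)
    (fun i j hij => apply_eq_zero_of_eq_conjTranspose_mul_diagonal hD hB
      fun h => hij (Subtype.ext h)) fun k => ?_
  obtain ⟨lam, hlam, hk⟩ : ∃ lam : ℂ, ‖lam‖ = 1 ∧ lam ^ 2 = k := by
    obtain ⟨i, hi⟩ := k.2
    exact exists_sq_eq_of_norm_eq_one (hi ▸ hD i)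
  suffices hblock : B.submatrix Subtype.val Subtype.val =
      lam ^ 2 • (B.submatrix (Subtype.val : {i // Set.rangeFactorization D i = k} → m)
        Subtype.val)ᴴ by
    obtain ⟨μ, hμ⟩ := exists_starCongruent_diagonal_of_eq_sq_smul_conjTranspose hlam hblock
    exact ⟨_, hμ⟩
  ext i j
  rw [submatrix_apply, apply_eq_star_mul_of_eq_conjTranspose_mul_diagonal hB, mul_comm, hk,
    ← congrArg Subtype.val j.2]
  rfl

noncomputable def cosquare (A : Matrix m m ℂ) : Matrix m m ℂ := (Aᴴ)⁻¹ * A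

theorem cosquare_conjTranspose_mul_mul {S : Matrix m m ℂ} (hS : IsUnit S) (A : Matrix m m ℂ) :
    cosquare (Sᴴ * A * S) = S⁻¹ * cosquare A * S := by
  have hSH : IsUnit Sᴴ.det := by simpa using ((isUnit_iff_isUnit_det S).mp hS).star
  simp only [cosquare, conjTranspose_mul, conjTranspose_conjTranspose, Matrix.mul_inv_rev,
    Matrix.mul_assoc, nonsing_inv_mul_cancel_left _ _ hSH]

theorem eq_conjTranspose_mul_cosquare {A : Matrix m m ℂ} (hA : IsUnit A) :
    A = Aᴴ * cosquare A := by
  have hAH : IsUnit Aᴴ.det := by simpa using ((isUnit_iff_isUnit_det A).mp hA).star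
  rw [cosquare, ← Matrix.mul_assoc, mul_nonsing_inv _ hAH, Matrix.one_mul]

theorem exists_starCongruent_diagonal_of_similar_cosquare {A : Matrix m m ℂ} (hA : IsUnit A)
    {D : m → ℂ} (hD : ∀ i, ‖D i‖ = 1) (h : MatSimilar (cosquare A) (diagonal D)) :
    ∃ d : m → ℂ, StarCongruent A (diagonal d) := by
  obtain ⟨S, hS, hsim⟩ := h
  have hS' : IsUnit S⁻¹ := isUnit_nonsing_inv_iff.mpr hS
  set B := (S⁻¹)ᴴ * A * S⁻¹
  have hBA : StarCongruent B A := ⟨S⁻¹, hS', rfl⟩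
  have hB : IsUnit B := ((isUnit_conjTranspose _).mpr hS' |>.mul hA).mul hS'
  have hcosB : cosquare B = diagonal D := by
    have hdet := (isUnit_iff_isUnit_det S).mp hS
    rw [cosquare_conjTranspose_mul_mul hS', hsim, nonsing_inv_nonsing_inv _ hdet,
      Matrix.mul_assoc, Matrix.mul_assoc, mul_nonsing_inv _ hdet, Matrix.mul_one,
      ← Matrix.mul_assoc, mul_nonsing_inv _ hdet, Matrix.one_mul]
  obtain ⟨d, hd⟩ := exists_starCongruent_diagonal_of_eq_conjTranspose_mul_diagonal hD
    (hcosB ▸ eq_conjTranspose_mul_cosquare hB)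
  exact ⟨d, hBA.symm.trans hd⟩

theorem star_dotProduct_sign_diagonal_mulVec (P : m → Prop) [DecidablePred P] (v : m → ℂ) :
    star v ⬝ᵥ (diagonal (fun i => if P i then (1 : ℂ) else -1) *ᵥ v) =
      ((∑ i, if P i then Complex.normSq (v i) else -Complex.normSq (v i) : ℝ) : ℂ) := by
  simp only [dotProduct, mulVec_diagonal, Complex.ofReal_sum, Pi.star_apply, Complex.star_def]
  refine Finset.sum_congr rfl fun i _ => ?_
  split_ifs <;> simp [Complex.normSq_eq_conj_mul_self]

theorem card_le_of_starCongruent_sign_diagonal (P Q : m → Prop) [DecidablePred P]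
    [DecidablePred Q]
    (h : StarCongruent (diagonal fun i => if Q i then (1 : ℂ) else -1)
      (diagonal fun i => if P i then (1 : ℂ) else -1)) :
    Fintype.card {i // Q i} ≤ Fintype.card {i // P i} := by
  obtain ⟨R, -, hR⟩ := h
  by_contra! hlt
  -- `ker Φ` consists of the `v` supported on `Q` with `R v` vanishing on `P`
  let Φ : (m → ℂ) →ₗ[ℂ] ({i // ¬Q i} → ℂ) × ({i // P i} → ℂ) :=
    (LinearMap.funLeft ℂ ℂ Subtype.val).prod (LinearMap.funLeft ℂ ℂ Subtype.val ∘ₗ R.mulVecLin)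
  have hker : LinearMap.ker Φ ≠ ⊥ := LinearMap.ker_ne_bot_of_finrank_lt <| by
    simp only [Module.finrank_prod, Module.finrank_fintype_fun_eq_card,
      Fintype.card_subtype_compl]
    have := Fintype.card_subtype_le Q
    omega
  obtain ⟨v, hv, hv0⟩ := (Submodule.ne_bot_iff _).mp hker
  have hvQ : ∀ i, ¬Q i → v i = 0 := fun i hi => congrFun (congrArg Prod.fst hv) ⟨i, hi⟩
  have hvP : ∀ i, P i → (R *ᵥ v) i = 0 := fun i hi => congrFun (congrArg Prod.snd hv) ⟨i, hi⟩
  have hq : star v ⬝ᵥ (diagonal (fun i => if Q i then (1 : ℂ) else -1) *ᵥ v) =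
      star (R *ᵥ v) ⬝ᵥ (diagonal (fun i => if P i then (1 : ℂ) else -1) *ᵥ (R *ᵥ v)) := by
    rw [hR, ← mulVec_mulVec, ← mulVec_mulVec, dotProduct_mulVec, star_mulVec]
  rw [star_dotProduct_sign_diagonal_mulVec, star_dotProduct_sign_diagonal_mulVec,
    Complex.ofReal_inj] at hq
  obtain ⟨i₀, hi₀⟩ := Function.ne_iff.mp hv0
  have hpos : 0 < ∑ i, if Q i then Complex.normSq (v i) else -Complex.normSq (v i) := by
    refine Finset.sum_pos' (fun i _ => ?_) ⟨i₀, Finset.mem_univ _, ?_⟩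
    · split_ifs with hi
      · exact Complex.normSq_nonneg _
      · simp [hvQ i hi]
    · have hQ : Q i₀ := by_contra fun hi => hi₀ (hvQ i₀ hi)
      simpa [hQ] using hi₀
  have hnonpos : ∑ i, (if P i then Complex.normSq ((R *ᵥ v) i) else
      -Complex.normSq ((R *ᵥ v) i)) ≤ 0 := by
    refine Finset.sum_nonpos fun i _ => ?_
    split_ifs with hi
    · simp [hvP i hi]
    · simpa using Complex.normSq_nonneg _
  linarith

end

theorem exists_perm_forall_iff_lt {n : ℕ} (P : Fin n → Prop) [DecidablePred P] :
    ∃ p ≤ n, ∃ σ : Equiv.Perm (Fin n), ∀ i, P (σ i) ↔ (i : ℕ) < p := by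
  have hp : Fintype.card {i // P i} ≤ n := (Fintype.card_subtype_le P).trans_eq (Fintype.card_fin n)
  have hlt := Fintype.card_fin_lt_of_le hp
  let e : {i : Fin n // (i : ℕ) < Fintype.card {i // P i}} ≃ {i // P i} :=
    Fintype.equivOfCardEq hlt
  let f : {i : Fin n // ¬(i : ℕ) < Fintype.card {i // P i}} ≃ {i // ¬P i} :=
    Fintype.equivOfCardEq (by rw [Fintype.card_subtype_compl, Fintype.card_subtype_compl, hlt])
  refine ⟨_, hp, Equiv.subtypeCongr e f, fun i => ?_⟩
  by_cases hi : (i : ℕ) < Fintype.card {i // P i}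
  · simp [Equiv.subtypeCongr, hi, (e ⟨i, hi⟩).2]
  · simp [Equiv.subtypeCongr, hi, (f ⟨i, hi⟩).2]

theorem exists_starCongruent_sign_diagonal {n : ℕ} {A : Matrix (Fin n) (Fin n) ℂ} (hA : IsUnit A)
    {lam : ℂ} (hlam : ‖lam‖ = 1) (hAlam : A = lam ^ 2 • Aᴴ) :
    ∃ p ≤ n, StarCongruent A (diagonal fun i => if (i : ℕ) < p then lam else -lam) := by
  obtain ⟨μ, hμ⟩ := exists_starCongruent_diagonal_of_eq_sq_smul_conjTranspose hlam hAlam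
  have hne := hμ.diagonal_ne_zero hA
  have hsign := hμ.trans (starCongruent_diagonal_div_norm hne)
  have hμ0 : ∀ i, μ i ≠ 0 := fun i => by simpa using right_ne_zero_of_mul (hne i)
  simp only [mul_ofReal_div_norm hlam (hμ0 _)] at hsign
  obtain ⟨p, hp, σ, hσ⟩ := exists_perm_forall_iff_lt fun i => 0 < μ i
  refine ⟨p, hp, hsign.trans ((starCongruent_submatrix_perm _ σ).symm.trans ?_)⟩
  simp only [submatrix_diagonal_equiv, Function.comp_def, hσ]
  exact StarCongruent.refl _

theorem eq_of_starCongruent_sign_diagonal {n p p' : ℕ} (hp : p ≤ n) (hp' : p' ≤ n) {lam : ℂ}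
    (hlam : ‖lam‖ = 1)
    (h : StarCongruent (diagonal fun i : Fin n => if (i : ℕ) < p then lam else -lam)
      (diagonal fun i : Fin n => if (i : ℕ) < p' then lam else -lam)) :
    p = p' := by
  have hsign : ∀ k : ℕ,
      starRingEnd ℂ lam • (diagonal fun i : Fin n => if (i : ℕ) < k then lam else -lam) =
        diagonal fun i : Fin n => if (i : ℕ) < k then (1 : ℂ) else -1 := fun k => by
    rw [← diagonal_smul]
    congr 1
    funext i
    by_cases hi : (i : ℕ) < k <;> simp [hi, conj_mul_self_of_norm_eq_one hlam]
  have h₁ := h.smul (starRingEnd ℂ lam)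
  rw [hsign, hsign] at h₁
  have hle := card_le_of_starCongruent_sign_diagonal _ _ h₁
  have hge := card_le_of_starCongruent_sign_diagonal _ _ h₁.symm
  rw [Fintype.card_fin_lt_of_le hp, Fintype.card_fin_lt_of_le hp'] at hle hge
  omega

/-- If `A` is nonsingular and its *cosquare is diagonalizable with all eigenvalues of
unit modulus, then `A` is *congruent to a diagonal matrix with unimodular diagonal
entries.  In particular, if `A⁻*A = λ²I` with `|λ| = 1`, then `λ̄A` is Hermitian and
`A` is *congruent to `λI_p ⊕ (-λI_q)` for uniquely determined `p, q` with `p + q = n`. -/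
theorem starCongruent_diagonal_of_diagonalizable_unimodular {n : ℕ}
    (A : Matrix (Fin n) (Fin n) ℂ) (hA : IsUnit A)
    (h : ∃ D : Fin n → ℂ, (∀ i, ‖D i‖ = 1) ∧
      MatSimilar ((Aᴴ)⁻¹ * A) (Matrix.diagonal D)) :
    (∃ d : Fin n → ℂ, (∀ i, ‖d i‖ = 1) ∧
      StarCongruent A (Matrix.diagonal d)) ∧
    ∀ lam : ℂ, ‖lam‖ = 1 → (Aᴴ)⁻¹ * A = lam ^ 2 • (1 : Matrix (Fin n) (Fin n) ℂ) →
      ((starRingEnd ℂ lam • A).IsHermitian ∧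
        ∃ p q : ℕ, p + q = n ∧
          StarCongruent A
            (Matrix.diagonal fun i => if (i : ℕ) < p then lam else -lam) ∧
          ∀ p' q' : ℕ, p' + q' = n →
            StarCongruent A
              (Matrix.diagonal fun i => if (i : ℕ) < p' then lam else -lam) →
            p' = p ∧ q' = q) := by
  refine ⟨?_, fun lam hlam hcos => ?_⟩
  · obtain ⟨D, hD, hsim⟩ := h
    obtain ⟨d, hd⟩ := exists_starCongruent_diagonal_of_similar_cosquare hA hD hsim
    have hd0 := hd.diagonal_ne_zero hA
    exact ⟨fun i => d i / ‖d i‖, fun i => by simp [hd0 i],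
      hd.trans (starCongruent_diagonal_div_norm hd0)⟩
  · have hAlam : A = lam ^ 2 • Aᴴ := by
      simpa [cosquare, hcos] using eq_conjTranspose_mul_cosquare hA
    obtain ⟨p, hp, hAp⟩ := exists_starCongruent_sign_diagonal hA hlam hAlam
    refine ⟨isHermitian_conj_smul_of_eq_sq_smul_conjTranspose hlam hAlam, p, n - p, by omega,
      hAp, fun p' q' hpq' hAp' => ?_⟩
    have := eq_of_starCongruent_sign_diagonal hp (by omega) hlam (hAp.symm.trans hAp')
    omega
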